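/- Let A be an m×n real matrix, b ∈ ℝᵐ, λ > 0, 1 < l ≤ 2, p ≥ 1, σ > 0, and define H_{l,p,σ}(x) = ∑_{i=1}^m |(Ax − b)_i|^l + λ·∑_{k=1}^n φ_σ(x_k)^p. If x ∈ ℝⁿ is such that every residual r_i = (Ax − b)_i is nonzero, then H_{l,p,σ} is differentiable at x with gradient ∇H_{l,p,σ}(x) = Aᵀ R (Ax − b) + λ·p·v(x), where R is the m×m diagonal matrix with entries R_ii = l·|r_i|^{l−2} and v(x) ∈ ℝⁿ has components v_j(x) = φ_σ(x_j)^{p−1}·erf(x_j/(√2·σ)). -/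

import Mathlib

open Real Matrix

/-- The error function `erf(t) = (2/√π)·∫₀ᵗ exp(−u²) du`. -/
noncomputable def erf (t : ℝ) : ℝ := (2 / Real.sqrt π) * ∫ u in (0 : ℝ)..t, Real.exp (-u ^ 2)

/-- The smoothed absolute value `φ_σ(t) = t·erf(t/(√2·σ)) + √(2/π)·σ·exp(−t²/(2σ²))`. -/
noncomputable def phi (σ t : ℝ) : ℝ :=
  t * erf (t / (Real.sqrt 2 * σ)) + Real.sqrt (2 / π) * σ * Real.exp (-t ^ 2 / (2 * σ ^ 2))

/-!
Every summand of `H` is a function of one real variable composed with either a coordinate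
projection or a coordinate of the affine map `y ↦ A y - b`, so by the chain rule the gradient of
`∑ᵢ gᵢ((A y - b)ᵢ)` is `Aᵀ (gᵢ'(rᵢ))ᵢ`. For `l > 1` the derivative of `|t| ^ l` is
`l |t| ^ (l - 2) t` everywhere, including `t = 0`. The identity `φ_σ' = erf(· / (√2 σ))` holds
because the derivative of the Gaussian term of `φ_σ` cancels the derivative of `erf` hitting the
prefactor `t`; and `φ_σ > 0` makes `t ↦ φ_σ(t) ^ p` differentiable for every real `p`.
-/

theorem hasDerivAt_erf (t : ℝ) : HasDerivAt erf (2 / √π * exp (-t ^ 2)) t := by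
  have hc : Continuous fun u : ℝ => exp (-u ^ 2) := by fun_prop
  exact (intervalIntegral.integral_hasDerivAt_right (hc.intervalIntegrable 0 t)
    (hc.stronglyMeasurableAtFilter _ _) hc.continuousAt).const_mul _

theorem erf_nonneg {t : ℝ} (ht : 0 ≤ t) : 0 ≤ erf t :=
  mul_nonneg (by positivity) (intervalIntegral.integral_nonneg ht fun u _ => (exp_pos _).le)

theorem erf_nonpos {t : ℝ} (ht : t ≤ 0) : erf t ≤ 0 := by
  rw [erf, intervalIntegral.integral_symm]
  exact mul_nonpos_of_nonneg_of_nonpos (by positivity)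
    (neg_nonpos.2 (intervalIntegral.integral_nonneg ht fun u _ => (exp_pos _).le))

theorem mul_erf_div_nonneg (t : ℝ) {c : ℝ} (hc : 0 < c) : 0 ≤ t * erf (t / c) := by
  rcases le_total 0 t with ht | ht
  · exact mul_nonneg ht (erf_nonneg (div_nonneg ht hc.le))
  · exact mul_nonneg_of_nonpos_of_nonpos ht (erf_nonpos (div_nonpos_of_nonpos_of_nonneg ht hc.le))

theorem phi_pos {σ : ℝ} (hσ : 0 < σ) (t : ℝ) : 0 < phi σ t := by
  have h2π : (0 : ℝ) < 2 / π := by positivity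
  exact add_pos_of_nonneg_of_pos (mul_erf_div_nonneg t (by positivity)) (by positivity)

theorem hasDerivAt_phi {σ : ℝ} (hσ : 0 < σ) (t : ℝ) :
    HasDerivAt (phi σ) (erf (t / (√2 * σ))) t := by
  have hs2 : √2 ^ 2 = 2 := sq_sqrt zero_le_two
  have harg : -(t / (√2 * σ)) ^ 2 = -t ^ 2 / (2 * σ ^ 2) := by
    rw [div_pow, mul_pow, hs2]; ring
  have hlin : HasDerivAt (fun t => t * erf (t / (√2 * σ)))
      (1 * erf (t / (√2 * σ)) + t * (2 / √π * exp (-(t / (√2 * σ)) ^ 2) * (1 / (√2 * σ)))) t :=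
    (hasDerivAt_id t).mul ((hasDerivAt_erf _).comp t ((hasDerivAt_id t).div_const (√2 * σ)))
  have hgauss : HasDerivAt (fun t => √(2 / π) * σ * exp (-t ^ 2 / (2 * σ ^ 2)))
      (√(2 / π) * σ * (exp (-t ^ 2 / (2 * σ ^ 2)) * (-(2 * t) / (2 * σ ^ 2)))) t := by
    simpa using (((hasDerivAt_pow 2 t).neg.div_const (2 * σ ^ 2)).exp).const_mul (√(2 / π) * σ)
  refine (hlin.add hgauss).congr_deriv ?_
  rw [harg, sqrt_div' _ pi_pos.le]
  have : 0 < √π := sqrt_pos.2 pi_pos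
  field_simp
  ring_nf
  rw [hs2]; ring

theorem hasDerivAt_phi_rpow {σ : ℝ} (hσ : 0 < σ) (p t : ℝ) :
    HasDerivAt (fun t => phi σ t ^ p) (p * phi σ t ^ (p - 1) * erf (t / (√2 * σ))) t :=
  (hasDerivAt_rpow_const (Or.inl (phi_pos hσ t).ne')).comp t (hasDerivAt_phi hσ t)

section Gradient

variable {ι κ : Type*} [Fintype ι] [Fintype κ]

noncomputable def dotProductCLM (g : ι → ℝ) : (ι → ℝ) →L[ℝ] ℝ :=
  LinearMap.toContinuousLinearMap (dotProductBilin ℝ ℝ g)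

@[simp]
theorem dotProductCLM_apply (g y : ι → ℝ) : dotProductCLM g y = g ⬝ᵥ y := rfl

theorem hasFDerivAt_sum_comp_apply {f : ι → ℝ → ℝ} {d : ι → ℝ} {x : ι → ℝ}
    (hf : ∀ k, HasDerivAt (f k) (d k) (x k)) :
    HasFDerivAt (fun y => ∑ k, f k (y k)) (dotProductCLM d) x := by
  refine (HasFDerivAt.fun_sum fun k _ => (hf k).comp_hasFDerivAt x (hasFDerivAt_apply k x))
    |>.congr_fderiv ?_
  ext y
  simp [dotProduct]

theorem hasFDerivAt_sum_comp_mulVec_sub (A : Matrix ι κ ℝ) (b : ι → ℝ)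
    {g : ι → ℝ → ℝ} {d : ι → ℝ} {x : κ → ℝ}
    (hg : ∀ i, HasDerivAt (g i) (d i) ((A *ᵥ x - b) i)) :
    HasFDerivAt (fun y => ∑ i, g i ((A *ᵥ y - b) i)) (dotProductCLM (Aᵀ *ᵥ d)) x := by
  have hA : HasFDerivAt (fun y => A *ᵥ y - b) (LinearMap.toContinuousLinearMap A.mulVecLin) x :=
    (LinearMap.toContinuousLinearMap A.mulVecLin).hasFDerivAt.sub_const b
  refine ((hasFDerivAt_sum_comp_apply hg).comp x hA).congr_fderiv ?_
  ext y
  simp [dotProduct_mulVec, mulVec_transpose]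

end Gradient

theorem H_generalized_gradient_general {m n : ℕ} (A : Matrix (Fin m) (Fin n) ℝ) (b : Fin m → ℝ)
    (lam l p σ : ℝ) (hl1 : 1 < l) (hσ : 0 < σ)
    (H : (Fin n → ℝ) → ℝ)
    (hH : ∀ y, H y = (∑ i, |(A.mulVec y - b) i| ^ l) + lam * ∑ k, phi σ (y k) ^ p)
    (x : Fin n → ℝ) :
    DifferentiableAt ℝ H x ∧
    ∀ j : Fin n,
      fderiv ℝ H x (Pi.single j 1)
        = (Aᵀ.mulVec ((Matrix.diagonal fun i => l * |(A.mulVec x - b) i| ^ (l - 2)).mulVec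
              (A.mulVec x - b))) j
          + lam * p * (phi σ (x j) ^ (p - 1) * erf (x j / (Real.sqrt 2 * σ))) := by
  set r := A *ᵥ x - b
  have hres := hasFDerivAt_sum_comp_mulVec_sub A b (x := x) fun i => hasDerivAt_abs_rpow (r i) hl1
  have hpen := hasFDerivAt_sum_comp_apply fun k => hasDerivAt_phi_rpow hσ p (x k)
  have hHx : HasFDerivAt H (dotProductCLM (Aᵀ *ᵥ fun i => l * |r i| ^ (l - 2) * r i) +
      lam • dotProductCLM fun k => p * phi σ (x k) ^ (p - 1) * erf (x k / (√2 * σ))) x := by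
    rw [funext hH]
    exact hres.add (hpen.const_mul lam)
  have hRr : diagonal (fun i => l * |r i| ^ (l - 2)) *ᵥ r = fun i => l * |r i| ^ (l - 2) * r i :=
    funext (mulVec_diagonal _ _)
  refine ⟨hHx.differentiableAt, fun j => ?_⟩
  rw [hHx.fderiv, hRr]
  simp only [_root_.add_apply, _root_.smul_apply, dotProductCLM_apply,
    dotProduct_single_one, smul_eq_mul]
  ring

/-- If every residual `rᵢ = (Ax − b)ᵢ` is nonzero, then the generalized functional
`H_{l,p,σ}(x) = ∑ᵢ |(Ax − b)ᵢ|^l + λ·∑ₖ φ_σ(xₖ)^p` is differentiable at `x` with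
gradient `∇H_{l,p,σ}(x) = Aᵀ R (Ax − b) + λ·p·v(x)`, where `R_ii = l·|rᵢ|^{l−2}`
and `v_j(x) = φ_σ(x_j)^{p−1}·erf(x_j/(√2·σ))`. -/
theorem H_generalized_gradient {m n : ℕ} (A : Matrix (Fin m) (Fin n) ℝ) (b : Fin m → ℝ)
    (lam l p σ : ℝ) (hlam : 0 < lam) (hl1 : 1 < l) (hl2 : l ≤ 2) (hp : 1 ≤ p) (hσ : 0 < σ)
    (H : (Fin n → ℝ) → ℝ)
    (hH : ∀ y, H y = (∑ i, |(A.mulVec y - b) i| ^ l) + lam * ∑ k, phi σ (y k) ^ p)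
    (x : Fin n → ℝ) (hr : ∀ i, (A.mulVec x - b) i ≠ 0) :
    DifferentiableAt ℝ H x ∧
    ∀ j : Fin n,
      fderiv ℝ H x (Pi.single j 1)
        = (Aᵀ.mulVec ((Matrix.diagonal fun i => l * |(A.mulVec x - b) i| ^ (l - 2)).mulVec
              (A.mulVec x - b))) j
          + lam * p * (phi σ (x j) ^ (p - 1) * erf (x j / (Real.sqrt 2 * σ))) :=
  H_generalized_gradient_general A b lam l p σ hl1 hσ H hH x
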